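/- Let 0 < q < 1 and |\theta| < 1/q, with \theta' := q\theta - 1. Define f[xy;\theta] := \sum_{m=1}^\infty q^m/([m]_q([m]_q - \theta q^m)). Then \theta f[xy;\theta] + (1-q) = \theta' f[xy;\theta'] - 1/\theta'. -/

import Mathlib

noncomputable def qnum (q : ℝ) (k : ℕ) : ℝ := (1 - q ^ k) / (1 - q)

noncomputable def fxy (q θ : ℝ) : ℝ :=
  ∑' m : ℕ+, q ^ (m : ℕ) / (qnum q m * (qnum q m - θ * q ^ (m : ℕ)))

/-!
By partial fractions, `t q^m / ([m]_q ([m]_q - t q^m)) = 1/([m]_q - t q^m) - 1/[m]_q`, and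
`[m+1]_q - θ q^(m+1) = [m]_q - θ' q^m`. So `θ' f[xy;θ'] - θ f[xy;θ]` is the telescoping series
`∑ (1/D(m+1) - 1/D(m))` with `D(m) = [m]_q - θ q^m`, whose sum is
`lim 1/D(m) - 1/D(1) = (1 - q) - 1/(1 - qθ) = (1 - q) + 1/θ'`.
-/

open Filter Topology

theorem Summable.hasSum_succ_sub_of_tendsto {G : Type*} [AddCommGroup G] [TopologicalSpace G]
    [IsTopologicalAddGroup G] [T2Space G] {f : ℕ → G} {l : G}
    (hs : Summable fun n ↦ f (n + 1) - f n) (hf : Tendsto f atTop (𝓝 l)) :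
    HasSum (fun n ↦ f (n + 1) - f n) (l - f 0) := by
  have hpartial :
      Tendsto (fun n ↦ ∑ i ∈ Finset.range n, (f (i + 1) - f i)) atTop (𝓝 (l - f 0)) := by
    simpa only [Finset.sum_range_sub] using hf.sub_const (f 0)
  rw [tendsto_nhds_unique hpartial hs.hasSum.tendsto_sum_nat]
  exact hs.hasSum

theorem mul_div_mul_sub_mul_eq_inv_sub_inv {K : Type*} [Field K] {a x : K} (t : K) (ha : a ≠ 0)
    (hb : a - t * x ≠ 0) : t * (x / (a * (a - t * x))) = (a - t * x)⁻¹ - a⁻¹ := by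
  field_simp
  ring

section qnum

variable {q : ℝ}

theorem qnum_one (hq : q ≠ 1) : qnum q 1 = 1 := by
  rw [qnum, pow_one, div_self (sub_ne_zero.2 hq.symm)]

theorem qnum_succ (hq : q ≠ 1) (n : ℕ) : qnum q (n + 1) = qnum q n + q ^ n := by
  have : 1 - q ≠ 0 := sub_ne_zero.2 hq.symm
  simp only [qnum]
  field_simp
  ring

theorem qnum_succ_sub_mul_pow (hq : q ≠ 1) (t : ℝ) (n : ℕ) :
    qnum q (n + 1) - t * q ^ (n + 1) = qnum q n - (q * t - 1) * q ^ n := by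
  rw [qnum_succ hq]
  ring

theorem one_le_qnum (hq0 : 0 ≤ q) (hq1 : q < 1) {n : ℕ} (hn : n ≠ 0) : 1 ≤ qnum q n := by
  rw [qnum, le_div_iff₀ (sub_pos.2 hq1), one_mul, sub_le_sub_iff_left]
  exact pow_le_of_le_one hq0 hq1.le hn

theorem min_le_qnum_sub_mul_pow (hq0 : 0 ≤ q) (hq1 : q < 1) (t : ℝ) {n : ℕ} (hn : n ≠ 0) :
    min 1 (1 - t * q) ≤ qnum q n - t * q ^ n := by
  have hqn : q ^ n ≤ q := pow_le_of_le_one hq0 hq1.le hn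
  have := one_le_qnum hq0 hq1 hn
  rcases le_total 0 t with ht | ht
  · nlinarith [min_le_right 1 (1 - t * q)]
  · nlinarith [min_le_left 1 (1 - t * q), pow_nonneg hq0 n]

theorem tendsto_qnum (hq0 : 0 ≤ q) (hq1 : q < 1) :
    Tendsto (qnum q) atTop (𝓝 (1 - q)⁻¹) := by
  have := ((tendsto_pow_atTop_nhds_zero_of_lt_one hq0 hq1).const_sub 1).div_const (1 - q)
  rwa [sub_zero, one_div] at this

theorem tendsto_inv_qnum_sub_mul_pow (hq0 : 0 ≤ q) (hq1 : q < 1) (t : ℝ) :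
    Tendsto (fun n ↦ (qnum q n - t * q ^ n)⁻¹) atTop (𝓝 (1 - q)) := by
  have hden := (tendsto_qnum hq0 hq1).sub
    ((tendsto_pow_atTop_nhds_zero_of_lt_one hq0 hq1).const_mul t)
  rw [mul_zero, sub_zero] at hden
  simpa only [inv_inv] using hden.inv₀ (inv_ne_zero (sub_pos.2 hq1).ne')

end qnum

section fxy

variable {q t : ℝ}

theorem summable_fxy_summand (hq0 : 0 ≤ q) (hq1 : q < 1) (ht : t * q < 1) :
    Summable fun n : ℕ ↦
      q ^ (n + 1) / (qnum q (n + 1) * (qnum q (n + 1) - t * q ^ (n + 1))) := by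
  have hδ : 0 < min 1 (1 - t * q) := lt_min one_pos (sub_pos.2 ht)
  refine .of_nonneg_of_le (fun n ↦ ?_) (fun n ↦ ?_)
    (((summable_nat_add_iff 1).2 (summable_geometric_of_lt_one hq0 hq1)).div_const
      (min 1 (1 - t * q)))
  all_goals
    have h1 := one_le_qnum hq0 hq1 (Nat.add_one_ne_zero n)
    have h2 := min_le_qnum_sub_mul_pow hq0 hq1 t (Nat.add_one_ne_zero n)
  · exact div_nonneg (pow_nonneg hq0 _) (mul_nonneg (by linarith) (by linarith))
  · calc _ ≤ q ^ (n + 1) / (1 * min 1 (1 - t * q)) := by gcongr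
      _ = _ := by rw [one_mul]

theorem hasSum_mul_fxy (hq0 : 0 ≤ q) (hq1 : q < 1) (ht : t * q < 1) :
    HasSum (fun n : ℕ ↦ (qnum q (n + 1) - t * q ^ (n + 1))⁻¹ - (qnum q (n + 1))⁻¹)
      (t * fxy q t) := by
  rw [fxy, tsum_pnat_eq_tsum_succ
    (f := fun m ↦ q ^ m / (qnum q m * (qnum q m - t * q ^ m)))]
  refine ((summable_fxy_summand hq0 hq1 ht).hasSum.mul_left t).congr_fun fun n ↦ ?_
  have h1 := one_le_qnum hq0 hq1 (Nat.add_one_ne_zero n)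
  have h2 := min_le_qnum_sub_mul_pow hq0 hq1 t (Nat.add_one_ne_zero n)
  have hδ : 0 < min 1 (1 - t * q) := lt_min one_pos (sub_pos.2 ht)
  exact (mul_div_mul_sub_mul_eq_inv_sub_inv t (by linarith) (by linarith)).symm

end fxy

theorem fxy_difference_equation (q θ : ℝ) (hq0 : 0 < q) (hq1 : q < 1)
    (hθ : |θ| < 1 / q) :
    θ * fxy q θ + (1 - q) = (q * θ - 1) * fxy q (q * θ - 1) - 1 / (q * θ - 1) := by
  have hθq : θ * q < 1 := (lt_div_iff₀ hq0).1 ((le_abs_self θ).trans_lt hθ)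
  have hθ' : q * θ - 1 < 0 := by linarith
  set d : ℕ → ℝ := fun n ↦ qnum q (n + 1) - θ * q ^ (n + 1)
  have hdiff : HasSum (fun n ↦ (d (n + 1))⁻¹ - (d n)⁻¹)
      ((q * θ - 1) * fxy q (q * θ - 1) - θ * fxy q θ) := by
    refine ((hasSum_mul_fxy hq0.le hq1 (by nlinarith : (q * θ - 1) * q < 1)).sub
      (hasSum_mul_fxy hq0.le hq1 hθq)).congr_fun fun n ↦ ?_
    simp only [d, ← qnum_succ_sub_mul_pow hq1.ne]
    ring
  have htel := Summable.hasSum_succ_sub_of_tendsto (f := fun n ↦ (d n)⁻¹) hdiff.summable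
    ((tendsto_inv_qnum_sub_mul_pow hq0.le hq1 θ).comp (tendsto_add_atTop_nat 1))
  have hd0 : d 0 = -(q * θ - 1) := by
    simp only [d, zero_add, pow_one, qnum_one hq1.ne]
    ring
  have hsum := hdiff.unique htel
  rw [hd0, inv_neg] at hsum
  rw [one_div]
  linarith
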